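/- arXiv:1507.03209 — 2 statements merged into one kernel-verified Lean document; each statement's English description precedes it below -/
import Mathlib

section
/- Let G be a digraph, x, y chip-distributions, and suppose there exist vectors f, g ∈ ℤ^V satisfying: (1) x + Lf = y, f ≥ 0, and f is reduced (f ≥ p fails for every nonzero period vector p of G); (2) 0 ≤ g ≤ f and g(v) < f(v) for some vertex v; (3) for every vertex v, either g(v) = f(v) or (x + Lg)(v) < d⁺(v). Then y is not reachable from x by a legal game, i.e., ¬(x ⤳ y). -/
namespace ChipFiring

variable {V : Type*}

/-- Out-degree of a vertex: total multiplicity of edges leaving `v`. -/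
def outdeg [Fintype V] (d : V → V → ℕ) (v : V) : ℕ := ∑ u, d v u

/-- In-degree of a vertex: total multiplicity of edges entering `v`. -/
def indeg [Fintype V] (d : V → V → ℕ) (v : V) : ℕ := ∑ u, d u v

/-- A digraph (multiplicity function) has no loops. -/
def Loopless (d : V → V → ℕ) : Prop := ∀ v, d v v = 0

/-- Weak connectivity: each pair of vertices is joined by an undirected walk. -/
def WeaklyConnected (d : V → V → ℕ) : Prop :=
  ∀ u v : V, Relation.ReflTransGen (fun a b => d a b ≠ 0 ∨ d b a ≠ 0) u v

/-- Strong connectivity: each ordered pair of vertices is joined by a directed walk. -/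
def StronglyConnected (d : V → V → ℕ) : Prop :=
  ∀ u v : V, Relation.ReflTransGen (fun a b => d a b ≠ 0) u v

/-- Eulerian: out-degree equals in-degree at each vertex. -/
def Eulerian [Fintype V] (d : V → V → ℕ) : Prop := ∀ v, outdeg d v = indeg d v

/-- The Laplacian matrix: `L(u,u) = -d⁺(u)`, and `L(u,v) = d(v,u)` for `u ≠ v`. -/
def laplacian [Fintype V] [DecidableEq V] (d : V → V → ℕ) : Matrix V V ℤ :=
  fun u v => if u = v then -(outdeg d v : ℤ) else (d v u : ℤ)

/-- Firing vertex `v`: `v` sends one chip along each outgoing edge. -/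
def fire [Fintype V] [DecidableEq V] (d : V → V → ℕ) (x : V → ℕ) (v : V) : V → ℕ :=
  fun u => if u = v then x v - outdeg d v else x u + d v u

/-- `LegalSeq d x α` : the sequence of firings `α` is legal from initial distribution `x`. -/
def LegalSeq [Fintype V] [DecidableEq V] (d : V → V → ℕ) : (V → ℕ) → List V → Prop
  | _, [] => True
  | x, v :: rest => outdeg d v ≤ x v ∧ LegalSeq d (fire d x v) rest

/-- The chip-distribution obtained from `x` after performing the firings `α`. -/
def runGame [Fintype V] [DecidableEq V] (d : V → V → ℕ) : (V → ℕ) → List V → (V → ℕ)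
  | x, [] => x
  | x, v :: rest => runGame d (fire d x v) rest

/-- The firing vector of a game: how many times each vertex is fired. -/
def firingVector [DecidableEq V] (α : List V) : V → ℕ := fun v => α.count v

/-- `x ⤳ y` : some legal game transforms `x` into `y`. -/
def Reaches [Fintype V] [DecidableEq V] (d : V → V → ℕ) (x y : V → ℕ) : Prop :=
  ∃ α : List V, LegalSeq d x α ∧ runGame d x α = y

/-- A period vector: a nonnegative integer vector in the kernel of the Laplacian. -/
def PeriodVector [Fintype V] [DecidableEq V] (d : V → V → ℕ) (p : V → ℕ) : Prop :=
  (laplacian d).mulVec (fun v => (p v : ℤ)) = 0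

/-- A vector `f ∈ ℕ^V` is reduced if `f ≥ p` fails for every nonzero period vector `p`. -/
def Reduced [Fintype V] [DecidableEq V] (d : V → V → ℕ) (f : V → ℕ) : Prop :=
  ∀ p : V → ℕ, PeriodVector d p → p ≠ 0 → ¬ (∀ v, p v ≤ f v)

/-- A distribution is recurrent if a nonempty legal game transforms it back to itself. -/
def Recurrent [Fintype V] [DecidableEq V] (d : V → V → ℕ) (x : V → ℕ) : Prop :=
  ∃ α : List V, α ≠ [] ∧ LegalSeq d x α ∧ runGame d x α = x

/-- Linear equivalence: `x = y + Lz` for some integer vector `z`. -/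
def LinEquiv [Fintype V] [DecidableEq V] (d : V → V → ℕ) (x y : V → ℕ) : Prop :=
  ∃ z : V → ℤ, ∀ v, (x v : ℤ) = (y v : ℤ) + (laplacian d).mulVec z v

/-- `x` is non-terminating: there is an infinite sequence of legal firings from `x`. -/
def NonTerminating [Fintype V] [DecidableEq V] (d : V → V → ℕ) (x : V → ℕ) : Prop :=
  ∃ s : ℕ → V, ∀ n : ℕ, LegalSeq d x (List.ofFn (fun i : Fin n => s i))

end ChipFiring

/-!
If a legal game with firing vector `h` led from `x` to `y`, then `L h = L f`. The Laplacian has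
nonnegative off-diagonal entries and nonpositive column sums, so the positive part of an integer
vector in its kernel is again in its kernel; thus `(f - h)⁺` is a period vector below `f`, which
vanishes because `f` is reduced. Hence `h - f` is a period vector and `m = g + (h - f)` satisfies
`L m = L g`. By (3), every vertex that is unstable in `x + L m` has `g = f`, i.e. `m = h` there. A
legal game from `x` can never overtake such an `m`, so `h ≤ m`, i.e. `f ≤ g`, contradicting (2).
-/

namespace ChipFiring

open Matrix

section Laplacian

variable {V : Type*} [Fintype V] [DecidableEq V] (d : V → V → ℕ)

theorem laplacian_nonneg_of_ne {u v : V} (h : u ≠ v) : 0 ≤ laplacian d u v := by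
  simp [laplacian, h]

theorem laplacian_mulVec_le_of_le {z w : V → ℤ} (hzw : z ≤ w) {u : V} (hu : z u = w u) :
    (laplacian d *ᵥ z) u ≤ (laplacian d *ᵥ w) u := by
  refine Finset.sum_le_sum fun v _ => ?_
  by_cases h : u = v
  · subst h
    rw [hu]
  · exact mul_le_mul_of_nonneg_left (hzw v) (laplacian_nonneg_of_ne d h)

theorem laplacian_mulVec_nonneg {w : V → ℤ} (hw : 0 ≤ w) {u : V} (hu : w u = 0) :
    0 ≤ (laplacian d *ᵥ w) u := by
  simpa using laplacian_mulVec_le_of_le d hw hu.symm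

theorem sum_laplacian_col (v : V) : ∑ u, laplacian d u v = -(d v v : ℤ) := by
  have hout : (outdeg d v : ℤ) = d v v + ∑ u ∈ Finset.univ.erase v, (d v u : ℤ) := by
    rw [outdeg, Nat.cast_sum, ← Finset.add_sum_erase _ _ (Finset.mem_univ v)]
  simp only [laplacian]
  rw [← Finset.add_sum_erase _ _ (Finset.mem_univ v), if_pos rfl,
    Finset.sum_congr rfl fun u hu => if_neg (Finset.ne_of_mem_erase hu), hout]
  ring

theorem sum_laplacian_mulVec_nonpos {w : V → ℤ} (hw : 0 ≤ w) :
    ∑ u, (laplacian d *ᵥ w) u ≤ 0 := by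
  calc ∑ u, (laplacian d *ᵥ w) u = ∑ v, (∑ u, laplacian d u v) * w v := by
        simp only [mulVec, dotProduct, Finset.sum_mul]
        exact Finset.sum_comm
    _ = ∑ v, -((d v v : ℤ) * w v) := by simp [sum_laplacian_col]
    _ ≤ 0 := Finset.sum_nonpos fun v _ => neg_nonpos.mpr (mul_nonneg (by positivity) (hw v))

theorem laplacian_mulVec_eq_zero_of_nonneg {w : V → ℤ} (hw : 0 ≤ w)
    (hLw : 0 ≤ laplacian d *ᵥ w) : laplacian d *ᵥ w = 0 :=
  funext fun u => (Finset.sum_eq_zero_iff_of_nonneg fun u _ => hLw u).mp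
    (le_antisymm (sum_laplacian_mulVec_nonpos d hw) (Finset.sum_nonneg fun u _ => hLw u)) u
    (Finset.mem_univ u)

theorem laplacian_mulVec_posPart_eq_zero {z : V → ℤ} (hz : laplacian d *ᵥ z = 0) :
    laplacian d *ᵥ z⁺ = 0 := by
  refine laplacian_mulVec_eq_zero_of_nonneg d (posPart_nonneg z) fun u => ?_
  rcases le_total (z u) 0 with h | h
  · exact laplacian_mulVec_nonneg d (posPart_nonneg z) (by simp [h])
  · calc (0 : ℤ) = (laplacian d *ᵥ z) u := by rw [hz]; rfl
      _ ≤ (laplacian d *ᵥ z⁺) u := laplacian_mulVec_le_of_le d (le_posPart z) (by simp [h])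

end Laplacian

theorem cast_firingVector_cons {V : Type*} [DecidableEq V] (v : V) (α : List V) :
    (fun u => (firingVector (v :: α) u : ℤ)) =
      (fun u => (firingVector α u : ℤ)) + Pi.single v 1 := by
  funext u
  by_cases h : u = v
  · subst h
    simp [firingVector]
  · simp [firingVector, h, Ne.symm h]

section Game

variable {V : Type*} [Fintype V] [DecidableEq V] {d : V → V → ℕ}

theorem cast_fire {x : V → ℕ} {v : V} (hv : outdeg d v ≤ x v) (u : V) :
    (fire d x v u : ℤ) = x u + (laplacian d *ᵥ Pi.single v 1) u := by
  rw [mulVec_single_one]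
  by_cases h : u = v
  · subst h
    simp [fire, laplacian, Nat.cast_sub hv, sub_eq_add_neg]
  · simp [fire, laplacian, h]

theorem LegalSeq.cast_runGame {x : V → ℕ} {α : List V} (hα : LegalSeq d x α) (u : V) :
    (runGame d x α u : ℤ) = x u + (laplacian d *ᵥ fun v => (firingVector α v : ℤ)) u := by
  induction α generalizing x with
  | nil => simp [runGame, firingVector, ← Pi.zero_def]
  | cons v α ih =>
    rw [runGame, ih hα.2, cast_firingVector_cons, mulVec_add, Pi.add_apply, cast_fire hα.1]
    ring

/-- When a vertex `v` first overtakes `m`, the current configuration is `x + L c` with `c ≤ m` and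
`c v = m v`, so at `v` it is at most `(x + L m) v < d⁺(v)`: the vertex cannot fire. -/
theorem LegalSeq.firingVector_le {x : V → ℕ} {α : List V} (hα : LegalSeq d x α) {m : V → ℤ}
    (hm : 0 ≤ m)
    (hstable : ∀ v, x v + (laplacian d *ᵥ m) v < outdeg d v ∨ (firingVector α v : ℤ) ≤ m v) :
    ∀ v, (firingVector α v : ℤ) ≤ m v := by
  induction α generalizing x m with
  | nil => exact fun v => by simpa [firingVector] using hm v
  | cons v α ih =>
    have hcons := congrFun (cast_firingVector_cons v α)
    simp only [Pi.add_apply] at hcons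
    have hmv : 1 ≤ m v := by
      by_contra! hmv
      have hmv0 : m v = 0 := le_antisymm (Int.lt_add_one_iff.mp hmv) (hm v)
      have hx : (outdeg d v : ℤ) ≤ x v := by exact_mod_cast hα.1
      rcases hstable v with hlt | hle
      · linarith [laplacian_mulVec_nonneg d hm hmv0]
      · have := hcons v
        rw [Pi.single_eq_same] at this
        linarith [Nat.cast_nonneg (α := ℤ) (firingVector α v)]
    set m' := m - Pi.single v 1 with hm'
    have hm'_nonneg : 0 ≤ m' := by
      intro u
      by_cases h : u = v
      · subst h
        simpa [hm'] using hmv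
      · simpa [hm', h] using hm u
    have hstate :
        ∀ u, (fire d x v u : ℤ) + (laplacian d *ᵥ m') u = x u + (laplacian d *ᵥ m) u := by
      intro u
      rw [cast_fire hα.1, hm', mulVec_sub, Pi.sub_apply]
      ring
    have hrest := ih hα.2 hm'_nonneg fun u => by
      rw [hstate u]
      refine (hstable u).imp id fun hle => ?_
      simp only [hm', Pi.sub_apply]
      linarith [hcons u]
    intro u
    have := hrest u
    simp only [hm', Pi.sub_apply] at this
    linarith [hcons u]

end Game

theorem le_of_laplacian_mulVec_eq {V : Type*} [Fintype V] [DecidableEq V] {d : V → V → ℕ}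
    {f h : V → ℤ} (hred : ∀ p : V → ℕ, PeriodVector d p → p ≠ 0 → ¬ (∀ v, (p v : ℤ) ≤ f v))
    (hf : 0 ≤ f) (hh : 0 ≤ h) (hL : laplacian d *ᵥ h = laplacian d *ᵥ f) : f ≤ h := by
  set p : V → ℕ := fun v => (f v - h v).toNat
  have hp : (fun v => (p v : ℤ)) = (f - h)⁺ := by
    funext v
    simp [p, posPart_def]
  have hperiod : PeriodVector d p := by
    rw [PeriodVector, hp]
    exact laplacian_mulVec_posPart_eq_zero d (by rw [mulVec_sub, hL, sub_self])
  intro w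
  by_contra! hw
  refine hred p hperiod (fun hp0 => ?_) fun v => ?_
  · have := congrFun hp0 w
    simp only [p, Pi.zero_apply, Int.toNat_eq_zero] at this
    linarith
  · have := congrFun hp v
    simp only [Pi.posPart_apply, posPart_def, Pi.sub_apply] at this
    rw [this, max_le_iff]
    exact ⟨by linarith [show 0 ≤ h v from hh v], hf v⟩

theorem not_reaches_of_certificate_general {V : Type*} [Fintype V] [DecidableEq V]
    (d : V → V → ℕ)
    (x y : V → ℕ) (f g : V → ℤ)
    (h1 : (∀ v, (y v : ℤ) = (x v : ℤ) + (laplacian d).mulVec f v) ∧ (∀ v, 0 ≤ f v) ∧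
      ∀ p : V → ℕ, PeriodVector d p → p ≠ 0 → ¬ (∀ v, (p v : ℤ) ≤ f v))
    (h2 : (∀ v, 0 ≤ g v ∧ g v ≤ f v) ∧ ∃ v, g v < f v)
    (h3 : ∀ v, g v = f v ∨ (x v : ℤ) + (laplacian d).mulVec g v < (outdeg d v : ℤ)) :
    ¬ Reaches d x y := by
  obtain ⟨hy, hf, hred⟩ := h1
  obtain ⟨hgf, v, hv⟩ := h2
  rintro ⟨α, hα, rfl⟩
  set h : V → ℤ := fun u => (firingVector α u : ℤ)
  have hL : laplacian d *ᵥ h = laplacian d *ᵥ f :=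
    funext fun u => by linarith [hα.cast_runGame u, hy u]
  have hfh : f ≤ h := le_of_laplacian_mulVec_eq hred hf (fun u => Nat.cast_nonneg _) hL
  have hLm : laplacian d *ᵥ (g + (h - f)) = laplacian d *ᵥ g := by
    rw [mulVec_add, mulVec_sub, hL, sub_self, add_zero]
  have hbound := hα.firingVector_le (m := g + (h - f))
    (fun u => by simp only [Pi.add_apply, Pi.sub_apply, Pi.zero_apply]; linarith [(hgf u).1, hfh u])
    fun u => by
      rw [hLm]
      refine (h3 u).symm.imp id fun hgu => ?_
      simp [h, hgu]
  have := hbound v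
  simp only [h, Pi.add_apply, Pi.sub_apply] at this
  linarith

/-- Soundness of the non-reachability certificate: if `f, g ∈ ℤ^V`
satisfy (1) `x + Lf = y`, `f ≥ 0` and `f` reduced; (2) `0 ≤ g ≤ f` with `g(v) < f(v)`
for some `v`; (3) for every `v`, `g(v) = f(v)` or `(x + Lg)(v) < d⁺(v)`; then `¬(x ⤳ y)`. -/
theorem not_reaches_of_certificate {V : Type*} [Fintype V] [DecidableEq V]
    (d : V → V → ℕ) (hloop : Loopless d) (hconn : WeaklyConnected d)
    (x y : V → ℕ) (f g : V → ℤ)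
    (h1 : (∀ v, (y v : ℤ) = (x v : ℤ) + (laplacian d).mulVec f v) ∧ (∀ v, 0 ≤ f v) ∧
      ∀ p : V → ℕ, PeriodVector d p → p ≠ 0 → ¬ (∀ v, (p v : ℤ) ≤ f v))
    (h2 : (∀ v, 0 ≤ g v ∧ g v ≤ f v) ∧ ∃ v, g v < f v)
    (h3 : ∀ v, g v = f v ∨ (x v : ℤ) + (laplacian d).mulVec g v < (outdeg d v : ℤ)) :
    ¬ Reaches d x y :=
  not_reaches_of_certificate_general d x y f g h1 h2 h3

end ChipFiring
end

section
/- Let G be a digraph and x, y chip-distributions such that ¬(x ⤳ y) but there exists h ∈ ℕ^V with y = x + Lh. Then there exist vectors f, g ∈ ℤ^V satisfying: (1) x + Lf = y, f ≥ 0, and f is reduced (f ≥ p fails for every nonzero period vector p of G); (2) 0 ≤ g ≤ f and g(v) < f(v) for some vertex v; (3) for every vertex v, either g(v) = f(v) or (x + Lg)(v) < d⁺(v). -/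
namespace ChipFiring

section Aux

variable {V : Type*} [Fintype V] [DecidableEq V]

lemma legalSeq_append (d : V → V → ℕ) (x : V → ℕ) (α : List V) (v : V)
    (h : LegalSeq d x α) (hv : outdeg d v ≤ runGame d x α v) :
    LegalSeq d x (α ++ [v]) := by
  induction α generalizing x with
  | nil => exact ⟨hv, trivial⟩
  | cons a rest ih => exact ⟨h.1, ih _ h.2 hv⟩

lemma runGame_append (d : V → V → ℕ) (x : V → ℕ) (α : List V) (v : V) :
    runGame d x (α ++ [v]) = fire d (runGame d x α) v := by
  induction α generalizing x with
  | nil => rfl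
  | cons a rest ih => exact ih _

lemma reaches_fire (d : V → V → ℕ) (x z : V → ℕ) (v : V)
    (h : Reaches d x z) (hv : outdeg d v ≤ z v) : Reaches d x (fire d z v) := by
  obtain ⟨α, hl, hr⟩ := h
  exact ⟨α ++ [v], legalSeq_append d x α v hl (by rw [hr]; exact hv),
    by rw [runGame_append, hr]⟩

lemma mulVec_e (L : Matrix V V ℤ) (v u : V) :
    L.mulVec (fun w => if w = v then 1 else 0) u = L u v := by
  simp [Matrix.mulVec, dotProduct, mul_ite]

lemma fire_cast (d : V → V → ℕ) (z : V → ℕ) (v : V) (hv : outdeg d v ≤ z v) (u : V) :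
    ((fire d z v u : ℤ)) = (z u : ℤ) + laplacian d u v := by
  unfold fire laplacian
  by_cases h : u = v
  · subst h; simp [Nat.cast_sub hv]; ring
  · simp [h]

lemma exists_reduced (d : V → V → ℕ) :
    ∀ (n : ℕ) (h : V → ℕ), ∑ v, h v ≤ n →
    ∃ f : V → ℕ, (∀ v, f v ≤ h v) ∧
      ((laplacian d).mulVec (fun v => (f v : ℤ)) =
        (laplacian d).mulVec (fun v => (h v : ℤ))) ∧ Reduced d f := by
  intro n
  induction n with
  | zero =>
      intro h hn
      refine ⟨h, fun v => le_rfl, rfl, ?_⟩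
      intro p hp hp0 hle
      apply hp0
      funext v
      have h0 : h v = 0 :=
        Finset.sum_eq_zero_iff.mp (Nat.le_zero.mp hn) v (Finset.mem_univ v)
      have := hle v
      show p v = 0
      omega
  | succ n ih =>
      intro h hn
      by_cases hr : Reduced d h
      · exact ⟨h, fun v => le_rfl, rfl, hr⟩
      · unfold Reduced at hr
        push_neg at hr
        obtain ⟨p, hp, hp0, hle⟩ := hr
        have hsum : ∑ v, (h v - p v) < ∑ v, h v := by
          obtain ⟨w, hw⟩ : ∃ w, p w ≠ 0 := by
            by_contra hc
            push_neg at hc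
            exact hp0 (funext fun v => hc v)
          refine Finset.sum_lt_sum (fun v _ => Nat.sub_le _ _) ⟨w, Finset.mem_univ w, ?_⟩
          have := hle w
          omega
        obtain ⟨f, hf1, hf2, hf3⟩ := ih (fun v => h v - p v)
          (by show ∑ v, (h v - p v) ≤ n; omega)
        refine ⟨f, fun v => le_trans (hf1 v) (Nat.sub_le _ _), ?_, hf3⟩
        rw [hf2]
        have hcast : (fun v => ((h v - p v : ℕ) : ℤ)) =
            (fun v => (h v : ℤ)) - (fun v => (p v : ℤ)) := by
          funext v; simp [Nat.cast_sub (hle v)]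
        rw [hcast, Matrix.mulVec_sub, hp, sub_zero]

lemma greedy (d : V → V → ℕ) (x : V → ℕ) (f : V → ℕ) :
    ∀ (n : ℕ) (g z : V → ℕ), (∑ v, (f v - g v)) ≤ n → (∀ v, g v ≤ f v) →
    Reaches d x z →
    (∀ v, (z v : ℤ) = (x v : ℤ) + (laplacian d).mulVec (fun u => (g u : ℤ)) v) →
    ∃ g' z' : V → ℕ, (∀ v, g' v ≤ f v) ∧ Reaches d x z' ∧
      (∀ v, (z' v : ℤ) = (x v : ℤ) + (laplacian d).mulVec (fun u => (g' u : ℤ)) v) ∧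
      (∀ v, g' v = f v ∨ z' v < outdeg d v) := by
  intro n
  induction n with
  | zero =>
      intro g z hn hgf hre heq
      refine ⟨g, z, hgf, hre, heq, fun v => Or.inl ?_⟩
      have h0 : f v - g v = 0 :=
        Finset.sum_eq_zero_iff.mp (Nat.le_zero.mp hn) v (Finset.mem_univ v)
      have := hgf v; omega
  | succ n ih =>
      intro g z hn hgf hre heq
      by_cases hA : ∀ v, g v = f v ∨ z v < outdeg d v
      · exact ⟨g, z, hgf, hre, heq, hA⟩
      · push_neg at hA
        obtain ⟨v, hv1, hv2⟩ := hA
        have hvlt : g v < f v := lt_of_le_of_ne (hgf v) hv1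
        set g' : V → ℕ := fun u => if u = v then g u + 1 else g u with hg'
        have hcast : (fun u => ((g' u : ℕ) : ℤ)) =
            (fun u => (g u : ℤ)) + (fun w => if w = v then 1 else 0) := by
          funext u
          by_cases h : u = v <;> simp [hg', h]
        have heq' : ∀ u, ((fire d z v u : ℤ)) =
            (x u : ℤ) + (laplacian d).mulVec (fun w => (g' w : ℤ)) u := by
          intro u
          rw [fire_cast d z v hv2 u, heq u, hcast, Matrix.mulVec_add]
          simp [Pi.add_apply, mulVec_e]; ring
        have hsum : ∑ u, (f u - g' u) < ∑ u, (f u - g u) := by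
          refine Finset.sum_lt_sum (fun u _ => ?_) ⟨v, Finset.mem_univ v, ?_⟩
          · by_cases h : u = v <;> simp [hg', h] <;> omega
          · simp [hg']; omega
        exact ih g' (fire d z v) (by show ∑ u, (f u - g' u) ≤ n; omega)
          (fun u => by
            by_cases h : u = v
            · simp [hg', h]; omega
            · simpa [hg', h] using hgf u)
          (reaches_fire d x z v hre hv2) heq'

end Aux

/-- Completeness of the non-reachability certificate: if `¬(x ⤳ y)` but
`y = x + Lh` for some `h ∈ ℕ^V`, then there exist `f, g ∈ ℤ^V` satisfying (1) `x + Lf = y`,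
`f ≥ 0` and `f` reduced; (2) `0 ≤ g ≤ f` with `g(v) < f(v)` for some `v`; (3) for every
`v`, `g(v) = f(v)` or `(x + Lg)(v) < d⁺(v)`. -/
theorem certificate_of_not_reaches {V : Type*} [Fintype V] [DecidableEq V]
    (d : V → V → ℕ) (hloop : Loopless d) (hconn : WeaklyConnected d)
    (x y : V → ℕ) (hnr : ¬ Reaches d x y)
    (hh : ∃ h : V → ℕ, ∀ v, (y v : ℤ) = (x v : ℤ) +
      (laplacian d).mulVec (fun u => (h u : ℤ)) v) :
    ∃ f g : V → ℤ,
      ((∀ v, (y v : ℤ) = (x v : ℤ) + (laplacian d).mulVec f v) ∧ (∀ v, 0 ≤ f v) ∧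
        ∀ p : V → ℕ, PeriodVector d p → p ≠ 0 → ¬ (∀ v, (p v : ℤ) ≤ f v)) ∧
      ((∀ v, 0 ≤ g v ∧ g v ≤ f v) ∧ ∃ v, g v < f v) ∧
      (∀ v, g v = f v ∨ (x v : ℤ) + (laplacian d).mulVec g v < (outdeg d v : ℤ)) := by
  obtain ⟨h, hh⟩ := hh
  obtain ⟨f₀, hf₀le, hf₀eq, hf₀red⟩ := exists_reduced d (∑ v, h v) h le_rfl
  have hy : ∀ v, (y v : ℤ) = (x v : ℤ) +
      (laplacian d).mulVec (fun u => (f₀ u : ℤ)) v := by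
    intro v; rw [hf₀eq]; exact hh v
  obtain ⟨g', z', hg'f, hre, heq, halt⟩ := greedy d x f₀ (∑ v, f₀ v) 0 x
    (by simp) (fun v => Nat.zero_le _) ⟨[], trivial, rfl⟩
    (by intro v
        have : (fun u => ((0 : V → ℕ) u : ℤ)) = (0 : V → ℤ) := by funext u; simp
        rw [this, Matrix.mulVec_zero]; simp)
  refine ⟨fun v => (f₀ v : ℤ), fun v => (g' v : ℤ), ⟨hy, fun v => Int.natCast_nonneg _, ?_⟩,
    ⟨fun v => ⟨Int.natCast_nonneg _, Nat.cast_le.mpr (hg'f v)⟩, ?_⟩, ?_⟩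
  · intro p hp hp0 hle
    exact hf₀red p hp hp0 (fun v => Nat.cast_le.mp (hle v))
  · by_contra hc
    push_neg at hc
    have hgf : g' = f₀ := funext fun v =>
      le_antisymm (hg'f v) (Nat.cast_le.mp (hc v))
    apply hnr
    have hz : z' = y := by
      funext v
      have : (z' v : ℤ) = (y v : ℤ) := by rw [heq v, hgf, hy v]
      exact_mod_cast this
    rwa [hz] at hre
  · intro v
    rcases halt v with h1 | h1
    · exact Or.inl (congrArg (Nat.cast : ℕ → ℤ) h1)
    · right
      rw [← heq v]
      exact_mod_cast h1

end ChipFiring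
end
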